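/- arXiv:2408.03832 — 3 statements merged into one kernel-verified Lean document; each statement's English description precedes it below -/
import Mathlib

section
/- Let D be a positive integer that is not a perfect square, let d be an integer with D ≡ d² (mod 16), and set ρ = (√D − d)/2 ∈ ℝ. Let P and Q be 2×2 integer matrices such that the two entries of the first row of Q are even, and suppose that the real 2×2 matrix A = P + (ρ/2)·Q has determinant 1. Then det(P) + ((D − d²)/16)·det(Q) = 1, and in particular det(P) is odd. -/
theorem stmt_2 (D d : ℤ) (hDpos : 0 < D) (hDnotsq : ¬ IsSquare D)
    (hd : D ≡ d^2 [ZMOD 16]) (P Q : Matrix (Fin 2) (Fin 2) ℤ)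
    (hQ00 : Even (Q 0 0)) (hQ01 : Even (Q 0 1))
    (hdet : (Matrix.of fun i j =>
      (P i j : ℝ) + (Real.sqrt D - d)/2/2 * Q i j).det = 1) :
    P.det + (D - d^2)/16 * Q.det = 1 ∧ Odd P.det := by
  have hirr : Irrational (Real.sqrt D) := irrational_sqrt_intCast_iff.mpr ⟨hDnotsq, hDpos.le⟩
  have hr2 : Real.sqrt D ^ 2 = (D : ℝ) := Real.sq_sqrt (by exact_mod_cast hDpos.le)
  rw [Matrix.det_fin_two] at hdet
  simp only [Matrix.of_apply] at hdet
  set r := Real.sqrt D with hr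
  set p := P.det with hp
  set q := Q.det with hq
  set S := P 0 0 * Q 1 1 + P 1 1 * Q 0 0 - P 0 1 * Q 1 0 - P 1 0 * Q 0 1 with hS
  have hpq : p = P 0 0 * P 1 1 - P 0 1 * P 1 0 := Matrix.det_fin_two P
  have hqq : q = Q 0 0 * Q 1 1 - Q 0 1 * Q 1 0 := Matrix.det_fin_two Q
  have haux : ((16*p + (D + d^2)*q - 4*d*S - 16 : ℤ) : ℝ)
      + ((4*S - 2*d*q : ℤ) : ℝ) * r = 0 := by
    push_cast [hpq, hqq, hS]
    linear_combination 16 * hdet - ((Q 0 0 : ℝ) * Q 1 1 - (Q 0 1 : ℝ) * Q 1 0) * hr2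
  have hB : 4*S - 2*d*q = 0 := by
    by_contra hB
    have := (hirr.intCast_mul hB).ne_int (-(16*p + (D + d^2)*q - 4*d*S - 16))
    apply this
    push_cast at haux ⊢
    linarith [haux]
  have hA : 16*p + (D + d^2)*q - 4*d*S - 16 = 0 := by
    have : ((16*p + (D + d^2)*q - 4*d*S - 16 : ℤ) : ℝ) = 0 := by
      rw [hB] at haux; push_cast at haux ⊢; linarith
    exact_mod_cast this
  -- 16 ∣ D - d^2
  obtain ⟨m, hm⟩ : (16 : ℤ) ∣ D - d^2 := Int.ModEq.dvd hd.symm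
  have hdiv : (D - d^2)/16 = m := by rw [hm]; exact Int.mul_ediv_cancel_left m (by norm_num)
  have hkey : p + (D - d^2)/16 * q = 1 := by
    rw [hdiv]
    have h16 : 16*(p + m*q) = 16*1 := by linear_combination hA + d*hB - q*hm
    exact mul_left_cancel₀ (by norm_num : (16:ℤ) ≠ 0) h16
  refine ⟨hkey, ?_⟩
  have hqeven : Even q := by
    rw [hqq]
    obtain ⟨a, ha⟩ := hQ00
    obtain ⟨b, hb⟩ := hQ01
    exact ⟨(a * Q 1 1 - b * Q 1 0), by rw [ha, hb]; ring⟩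
  obtain ⟨c, hc⟩ := hqeven
  exact ⟨-((D - d^2)/16) * c, by rw [← hkey, hc]; ring⟩
end

section
/- Let D be a nonnegative integer, d an integer with D ≡ d² (mod 16), and set ρ = (√D − d)/2 ∈ ℝ. Let P, Q be 2×2 integer matrices, let p, q ∈ ℤ², and set A = P + (ρ/2)·Q (a real 2×2 matrix) and v = (1/2)·(p + ρ·q) ∈ ℝ². Then there exist integer vectors m, n ∈ ℤ² such that A·v = (1/2)·(P·p) + m + (ρ/4)·n. In particular, the 'rational part' of A·v is congruent to (1/2)·P·p modulo integer vectors. -/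
theorem stmt_3 (D d : ℤ) (hD : 0 ≤ D) (hd : D ≡ d^2 [ZMOD 16])
    (P Q : Matrix (Fin 2) (Fin 2) ℤ) (p q : Fin 2 → ℤ) :
    ∃ m n : Fin 2 → ℤ, ∀ i : Fin 2,
      (Matrix.of fun i j =>
          (P i j : ℝ) + (Real.sqrt D - d)/2/2 * Q i j).mulVec
        (fun j => (1/2 : ℝ) * ((p j : ℝ) + (Real.sqrt D - d)/2 * q j)) i
      = (1/2 : ℝ) * (P.mulVec p i : ℤ) + (m i : ℝ)
          + (Real.sqrt D - d)/2/4 * (n i : ℝ) := by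
  obtain ⟨k, hk⟩ := hd.dvd
  refine ⟨fun i => -k * (Q.mulVec q) i,
    fun i => 2 * (P.mulVec q) i + (Q.mulVec p) i - d * (Q.mulVec q) i, fun i => ?_⟩
  have hs : Real.sqrt D * Real.sqrt D = (D : ℝ) :=
    Real.mul_self_sqrt (by exact_mod_cast hD)
  have hk' : (d:ℝ)^2 - D = 16 * k := by exact_mod_cast hk
  fin_cases i <;>
  · simp only [Matrix.mulVec, dotProduct, Fin.sum_univ_two, Matrix.of_apply,
      Fin.isValue, Matrix.cons_val_zero, Matrix.cons_val_one, Matrix.head_cons]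
    push_cast
    first
    | linear_combination ((Q 0 0 : ℝ) * q 0 + Q 0 1 * q 1) / 16 * hs -
        ((Q 0 0 : ℝ) * q 0 + Q 0 1 * q 1) / 16 * hk'
    | linear_combination ((Q 1 0 : ℝ) * q 0 + Q 1 1 * q 1) / 16 * hs -
        ((Q 1 0 : ℝ) * q 0 + Q 1 1 * q 1) / 16 * hk'
end

section
/- Let D be an integer such that either D = 12, or D ≥ 17 and (4 ∣ D or D ≡ 1 (mod 8)). Then S_D is nonempty; that is, there exists an integer e with e² ≡ D (mod 8), e² < D, and (e+4)² < D. -/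
theorem stmt_16 (D : ℤ)
    (hD : D = 12 ∨ (17 ≤ D ∧ (4 ∣ D ∨ D ≡ 1 [ZMOD 8]))) :
    ∃ e : ℤ, e^2 ≡ D [ZMOD 8] ∧ e^2 < D ∧ (e+4)^2 < D := by
  simp only [Int.ModEq] at *
  rcases hD with h | ⟨h17, h4 | h1⟩
  · exact ⟨-2, by subst h; norm_num⟩
  · obtain ⟨k, hk⟩ := h4
    rcases Int.even_or_odd k with ⟨m, hm⟩ | ⟨m, hm⟩
    · exact ⟨0, by constructor; omega; constructor <;> nlinarith⟩
    · exact ⟨-2, by constructor; omega; constructor <;> nlinarith⟩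
  · exact ⟨-1, by constructor; omega; constructor <;> nlinarith⟩
end
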